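/- arXiv:1404.6006 — 2 statements merged into one kernel-verified Lean document; each statement's English description precedes it below -/
import Mathlib

section
/- Let f : [0,1] → [0,1] be continuous. If f has a periodic point of period 3, then f has periodic points of every period n ≥ 1. -/
open Set Function

lemma fixedPt_of_sub_image {g : ℝ → ℝ} (hg : Continuous g) {u v : ℝ} (huv : u ≤ v)
    (h : Icc u v ⊆ g '' Icc u v) : ∃ y ∈ Icc u v, g y = y := by
  obtain ⟨s, hs, hgs⟩ := h (left_mem_Icc.2 huv)
  obtain ⟨t, ht, hgt⟩ := h (right_mem_Icc.2 huv)
  have h1 : g s - s ≤ 0 := by rw [hgs]; linarith [hs.1]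
  have h2 : 0 ≤ g t - t := by rw [hgt]; linarith [ht.2]
  have hmem : (0:ℝ) ∈ uIcc (g s - s) (g t - t) := by
    rw [mem_uIcc]; left; exact ⟨h1, h2⟩
  obtain ⟨y, hy, hy0⟩ := intermediate_value_uIcc
    (Continuous.continuousOn (by continuity : Continuous (fun w => g w - w))) hmem
  have hy0' : g y - y = 0 := hy0
  exact ⟨y, uIcc_subset_Icc hs ht hy, by linarith⟩

/-- Helper: if `g s = p`, `g t = q` with `s ≤ t`, `p ≤ q`, there is a subinterval of
`[s,t]` mapping exactly onto `[p,q]`. -/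
lemma exact_covering_aux {g : ℝ → ℝ} (hg : Continuous g) {s t p q : ℝ} (hst : s ≤ t)
    (hpq : p ≤ q) (hgs : g s = p) (hgt : g t = q) :
    ∃ u' v', s ≤ u' ∧ u' ≤ v' ∧ v' ≤ t ∧ g '' Icc u' v' = Icc p q := by
  set S : Set ℝ := {w | w ∈ Icc s t ∧ g w = q} with hS
  have hSclosed : IsClosed S := (isClosed_Icc.inter (isClosed_singleton.preimage hg))
  have hSne : S.Nonempty := ⟨t, right_mem_Icc.2 hst, hgt⟩
  have hSbdd : BddBelow S := ⟨s, fun w hw => hw.1.1⟩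
  set v' := sInf S with hv'
  have hv'mem : v' ∈ S := hSclosed.csInf_mem hSne hSbdd
  have hsv' : s ≤ v' := hv'mem.1.1
  have hv't : v' ≤ t := hv'mem.1.2
  set T : Set ℝ := {w | w ∈ Icc s v' ∧ g w = p} with hT
  have hTclosed : IsClosed T := (isClosed_Icc.inter (isClosed_singleton.preimage hg))
  have hTne : T.Nonempty := ⟨s, left_mem_Icc.2 hsv', hgs⟩
  have hTbdd : BddAbove T := ⟨v', fun w hw => hw.1.2⟩
  set u' := sSup T with hu'
  have hu'mem : u' ∈ T := hTclosed.csSup_mem hTne hTbdd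
  have hsu' : s ≤ u' := hu'mem.1.1
  have hu'v' : u' ≤ v' := hu'mem.1.2
  have hgu' : g u' = p := hu'mem.2
  have hgv' : g v' = q := hv'mem.2
  refine ⟨u', v', hsu', hu'v', hv't, Subset.antisymm ?_ ?_⟩
  · rintro _ ⟨w, hw, rfl⟩
    by_contra hout
    rw [mem_Icc, not_and_or, not_le, not_le] at hout
    rcases hout with hlt | hgt'
    · -- g w < p : find w' in [w, v'] with g w' = p, contradicting sSup
      have : p ∈ Icc (g w) (g v') := by rw [hgv']; exact ⟨hlt.le, hpq⟩
      obtain ⟨w', hw', hgw'⟩ := intermediate_value_Icc hw.2 hg.continuousOn this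
      have hw'T : w' ∈ T := ⟨⟨hsu'.trans (hw.1.trans hw'.1), hw'.2⟩, hgw'⟩
      have : w' ≤ u' := le_csSup hTbdd hw'T
      have : w' = w := le_antisymm (this.trans hw.1) hw'.1
      rw [this] at hgw'; linarith [hgw' ▸ hlt]
    · -- q < g w : find w' in [u', w] with g w' = q, contradicting sInf
      have : q ∈ Icc (g u') (g w) := by rw [hgu']; exact ⟨hpq, hgt'.le⟩
      obtain ⟨w', hw', hgw'⟩ := intermediate_value_Icc hw.1 hg.continuousOn this
      have hw'S : w' ∈ S := ⟨⟨hsu'.trans hw'.1, (hw'.2.trans hw.2).trans hv't⟩, hgw'⟩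
      have : v' ≤ w' := csInf_le hSbdd hw'S
      have : w' = w := le_antisymm hw'.2 ((hw.2).trans this)
      rw [this] at hgw'; linarith [hgw' ▸ hgt']
  · have := intermediate_value_Icc hu'v' hg.continuousOn
    rw [hgu', hgv'] at this; exact this

/-- Exact covering: if `[p,q] ⊆ g '' [u,v]`, there is a subinterval of `[u,v]` mapping
exactly onto `[p,q]`. -/
lemma exact_covering {g : ℝ → ℝ} (hg : Continuous g) {u v p q : ℝ}
    (hpq : p ≤ q) (h : Icc p q ⊆ g '' Icc u v) :
    ∃ u' v', u ≤ u' ∧ u' ≤ v' ∧ v' ≤ v ∧ g '' Icc u' v' = Icc p q := by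
  obtain ⟨s, hs, hgs⟩ := h (left_mem_Icc.2 hpq)
  obtain ⟨t, ht, hgt⟩ := h (right_mem_Icc.2 hpq)
  rcases le_total s t with hst | hts
  · obtain ⟨u', v', h1, h2, h3, h4⟩ := exact_covering_aux hg hst hpq hgs hgt
    exact ⟨u', v', hs.1.trans h1, h2, h3.trans ht.2, h4⟩
  · have hg' : Continuous (fun w => g (-w)) := hg.comp continuous_neg
    obtain ⟨u', v', h1, h2, h3, h4⟩ := exact_covering_aux hg' (neg_le_neg hts) hpq
      (by simpa using hgs) (by simpa using hgt)
    refine ⟨-v', -u', ?_, by linarith, ?_, ?_⟩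
    · linarith [ht.1]
    · linarith [hs.2]
    · rw [← h4]
      rw [← Set.image_neg_Icc, ← Set.image_comp]
      rfl

lemma itinerary {F : ℝ → ℝ} (hF : Continuous F) {k1 k2 j1 j2 : ℝ} (hk : k1 ≤ k2)
    (hj : j1 ≤ j2)
    (hKK : Icc k1 k2 ⊆ F '' Icc k1 k2) (hJK : Icc j1 j2 ⊆ F '' Icc k1 k2)
    (hKJ : Icc k1 k2 ⊆ F '' Icc j1 j2) (N : ℕ) :
    ∃ y, y ∈ Icc k1 k2 ∧ (∀ k ≤ N, F^[k] y ∈ Icc k1 k2) ∧ F^[N+1] y ∈ Icc j1 j2 ∧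
      F^[N+2] y = y := by
  have key : ∀ m : ℕ, ∃ u v : ℝ, u ≤ v ∧ F^[m] '' Icc u v = Icc k1 k2 ∧
      ∀ k ≤ m, F^[k] '' Icc u v ⊆ Icc k1 k2 := by
    intro m
    induction m with
    | zero =>
      refine ⟨k1, k2, hk, by simp, ?_⟩
      intro k hk0
      interval_cases k
      simp
    | succ m ih =>
      obtain ⟨u, v, huv, him, hinv⟩ := ih
      have h1 : F^[m+1] '' Icc u v = F '' Icc k1 k2 := by
        rw [Function.iterate_succ', Set.image_comp, him]
      have h2 : Icc k1 k2 ⊆ F^[m+1] '' Icc u v := by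
        rw [h1]; exact hKK
      obtain ⟨u', v', hu, huv', hv, heq⟩ := exact_covering (hF.iterate (m+1)) hk h2
      have hsub : Icc u' v' ⊆ Icc u v := Icc_subset_Icc hu hv
      refine ⟨u', v', huv', heq, ?_⟩
      intro k hkm
      rcases Nat.lt_or_ge k (m+1) with h | h
      · exact (Set.image_mono (f := _) hsub).trans (hinv k (Nat.lt_succ_iff.mp h))
      · have : k = m + 1 := le_antisymm hkm h
        rw [this, heq]
  obtain ⟨u, v, huv, him, hinv⟩ := key N
  have h1 : F^[N+1] '' Icc u v = F '' Icc k1 k2 := by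
    rw [Function.iterate_succ', Set.image_comp, him]
  have h2 : Icc j1 j2 ⊆ F^[N+1] '' Icc u v := by rw [h1]; exact hJK
  obtain ⟨u', v', hu, huv', hv, heq⟩ := exact_covering (hF.iterate (N+1)) hj h2
  have hsub : Icc u' v' ⊆ Icc u v := Icc_subset_Icc hu hv
  have hsubK : Icc u' v' ⊆ Icc k1 k2 := by
    have := hinv 0 (Nat.zero_le N)
    simpa using hsub.trans (by simpa using this)
  have h3 : F^[N+2] '' Icc u' v' = F '' Icc j1 j2 := by
    rw [show N+2 = (N+1)+1 from rfl, Function.iterate_succ', Set.image_comp, heq]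
  have h4 : Icc u' v' ⊆ F^[N+2] '' Icc u' v' := by
    rw [h3]; exact hsubK.trans hKJ
  obtain ⟨y, hy, hfy⟩ := fixedPt_of_sub_image (hF.iterate (N+2)) huv' h4
  refine ⟨y, hsubK hy, fun k hkN => hinv k hkN ⟨_, hsub hy, rfl⟩, ?_, hfy⟩
  rw [← heq]; exact ⟨y, hy, rfl⟩

noncomputable def ext01 (f : Set.Icc (0:ℝ) 1 → Set.Icc (0:ℝ) 1) : ℝ → ℝ :=
  fun t => ((f (Set.projIcc 0 1 zero_le_one t)) : ℝ)

lemma ext01_continuous (f : Set.Icc (0:ℝ) 1 → Set.Icc (0:ℝ) 1) (hf : Continuous f) :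
    Continuous (ext01 f) :=
  continuous_subtype_val.comp (hf.comp continuous_projIcc)

lemma ext01_coe (f : Set.Icc (0:ℝ) 1 → Set.Icc (0:ℝ) 1) (p : Set.Icc (0:ℝ) 1) :
    ext01 f ↑p = ↑(f p) := by
  simp [ext01, Set.projIcc_val]

lemma ext01_iterate (f : Set.Icc (0:ℝ) 1 → Set.Icc (0:ℝ) 1) (k : ℕ) (p : Set.Icc (0:ℝ) 1) :
    (ext01 f)^[k] ↑p = ↑(f^[k] p) := by
  induction k generalizing p with
  | zero => rfl
  | succ k ih =>
    rw [Function.iterate_succ_apply, Function.iterate_succ_apply, ext01_coe]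
    exact ih (f p)

lemma core (f : Set.Icc (0:ℝ) 1 → Set.Icc (0:ℝ) 1) (hf : Continuous f)
    {k1 k2 j1 j2 : ℝ} (hk : k1 ≤ k2) (hj : j1 ≤ j2)
    (hK01 : Icc k1 k2 ⊆ Icc (0:ℝ) 1)
    (hKK : Icc k1 k2 ⊆ ext01 f '' Icc k1 k2)
    (hJK : Icc j1 j2 ⊆ ext01 f '' Icc k1 k2)
    (hKJ : Icc k1 k2 ⊆ ext01 f '' Icc j1 j2)
    (B : Set.Icc (0:ℝ) 1)
    (hcap : Icc k1 k2 ∩ Icc j1 j2 ⊆ {(B : ℝ)})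
    (hB3 : Function.minimalPeriod f B = 3)
    (hffB : ((f (f B) : ℝ)) ∉ Icc k1 k2) :
    ∀ n : ℕ, 1 ≤ n → ∃ y : Set.Icc (0 : ℝ) 1, Function.minimalPeriod f y = n := by
  set F := ext01 f with hFdef
  have hF : Continuous F := ext01_continuous f hf
  intro n hn
  rcases Nat.lt_or_ge n 2 with h2 | h2
  · -- n = 1 : fixed point
    have hn1 : n = 1 := by omega
    obtain ⟨y, hy, hfy⟩ := fixedPt_of_sub_image hF hk hKK
    refine ⟨⟨y, hK01 hy⟩, ?_⟩
    rw [hn1, Function.minimalPeriod_eq_one_iff_isFixedPt]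
    have : (f ⟨y, hK01 hy⟩ : ℝ) = y := by rw [← ext01_coe f ⟨y, hK01 hy⟩]; exact hfy
    exact Subtype.ext this
  · obtain ⟨N, rfl⟩ : ∃ N, n = N + 2 := ⟨n - 2, by omega⟩
    obtain ⟨y, hyK, hitin, hyJ, hfix⟩ := itinerary hF hk hj hKK hJK hKJ N
    set Y : Set.Icc (0:ℝ) 1 := ⟨y, hK01 hyK⟩ with hYdef
    have hco : ∀ k : ℕ, F^[k] y = ↑(f^[k] Y) := fun k => ext01_iterate f k Y
    have hper : Function.IsPeriodicPt f (N+2) Y := by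
      have : (f^[N+2] Y : ℝ) = (Y : ℝ) := by rw [← hco]; exact hfix
      exact Subtype.ext this
    have hmdvd : Function.minimalPeriod f Y ∣ N + 2 := hper.minimalPeriod_dvd
    have hmpos : 0 < Function.minimalPeriod f Y := hper.minimalPeriod_pos (by omega)
    set m := Function.minimalPeriod f Y with hmdef
    refine ⟨Y, ?_⟩
    by_contra hne
    have hmlt : m < N + 2 := lt_of_le_of_ne (Nat.le_of_dvd (by omega) hmdvd) hne
    -- f^[N+1] Y = B
    have hidx : (N + 1) % m ≤ N := by
      have := Nat.mod_lt (N+1) hmpos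
      omega
    have hmod : f^[(N+1) % m] Y = f^[N+1] Y := Function.iterate_mod_minimalPeriod_eq
    have hNK : (↑(f^[N+1] Y) : ℝ) ∈ Icc k1 k2 := by
      rw [← hmod, ← hco]; exact hitin _ hidx
    have hNJ : (↑(f^[N+1] Y) : ℝ) ∈ Icc j1 j2 := by rw [← hco]; exact hyJ
    have hNB : f^[N+1] Y = B := Subtype.ext (hcap ⟨hNK, hNJ⟩)
    -- hence m = 3
    have hYper : Y ∈ Function.periodicPts f :=
      Function.minimalPeriod_pos_iff_mem_periodicPts.mp hmpos
    have hm3 : m = 3 := by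
      have := Function.minimalPeriod_apply_iterate hYper (N+1)
      rw [hNB, hB3] at this
      exact this.symm
    have h3dvd : (3:ℕ) ∣ N + 2 := hm3 ▸ hmdvd
    have hN4 : 4 ≤ N := by omega
    -- f^[2] Y = B
    have hmod2 : (N + 1) % 3 = 2 := by omega
    have h2B : f^[2] Y = B := by
      rw [← hNB, ← hmod]; congr 1; rw [hm3, hmod2]
    have h3Y : f^[3] Y = Y := by
      have := Function.isPeriodicPt_minimalPeriod f Y
      rwa [← hmdef, hm3] at this
    have hYfB : Y = f B := by
      rw [← h3Y, show (3:ℕ) = 1 + 2 from rfl, Function.iterate_add_apply, h2B,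
        Function.iterate_one]
    have h1K : (↑(f^[1] Y) : ℝ) ∈ Icc k1 k2 := by rw [← hco]; exact hitin 1 (by omega)
    rw [Function.iterate_one, hYfB] at h1K
    exact hffB h1K

lemma geom (f : Set.Icc (0:ℝ) 1 → Set.Icc (0:ℝ) 1) (hf : Continuous f)
    (a b c : Set.Icc (0:ℝ) 1) (hab : (a:ℝ) < b) (hbc : (b:ℝ) < c)
    (hB3 : Function.minimalPeriod f b = 3)
    (hcyc : (f a = b ∧ f b = c ∧ f c = a) ∨ (f a = c ∧ f c = b ∧ f b = a)) :
    ∀ n : ℕ, 1 ≤ n → ∃ y : Set.Icc (0 : ℝ) 1, Function.minimalPeriod f y = n := by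
  have hF : Continuous (ext01 f) := ext01_continuous f hf
  have hFa := ext01_coe f a
  have hFb := ext01_coe f b
  have hFc := ext01_coe f c
  rcases hcyc with ⟨h1, h2, h3⟩ | ⟨h1, h2, h3⟩
  · -- f a = b, f b = c, f c = a ; K = [b,c], J = [a,b]
    rw [h1] at hFa; rw [h2] at hFb; rw [h3] at hFc
    have hac : Icc (a:ℝ) (c:ℝ) ⊆ ext01 f '' Icc (b:ℝ) (c:ℝ) := by
      have := intermediate_value_Icc' hbc.le hF.continuousOn
      rwa [hFb, hFc] at this
    refine core f hf hbc.le hab.le (Icc_subset_Icc b.2.1 c.2.2)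
      ((Icc_subset_Icc hab.le le_rfl).trans hac)
      ((Icc_subset_Icc le_rfl hbc.le).trans hac) ?_ b ?_ hB3 ?_
    · have := intermediate_value_Icc hab.le hF.continuousOn
      rwa [hFa, hFb] at this
    · rintro w ⟨hw1, hw2⟩; exact le_antisymm hw2.2 hw1.1
    · rw [h2, h3]; rintro ⟨hw, -⟩; exact absurd hw (not_le.2 hab)
  · -- f a = c, f c = b, f b = a ; K = [a,b], J = [b,c]
    rw [h1] at hFa; rw [h2] at hFc; rw [h3] at hFb
    have hac : Icc (a:ℝ) (c:ℝ) ⊆ ext01 f '' Icc (a:ℝ) (b:ℝ) := by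
      have := intermediate_value_Icc' hab.le hF.continuousOn
      rwa [hFa, hFb] at this
    refine core f hf hab.le hbc.le (Icc_subset_Icc a.2.1 b.2.2)
      ((Icc_subset_Icc le_rfl hbc.le).trans hac)
      ((Icc_subset_Icc hab.le le_rfl).trans hac) ?_ b ?_ hB3 ?_
    · have := intermediate_value_Icc hbc.le hF.continuousOn
      rwa [hFb, hFc] at this
    · rintro w ⟨hw1, hw2⟩; exact le_antisymm hw1.2 hw2.1
    · rw [h3, h1]; rintro ⟨-, hw⟩; exact absurd hw (not_le.2 hbc)

theorem period_three_implies_all (f : Set.Icc (0 : ℝ) 1 → Set.Icc (0 : ℝ) 1)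
    (hf : Continuous f) (x : Set.Icc (0 : ℝ) 1) (hx : Function.minimalPeriod f x = 3) :
    ∀ n : ℕ, 1 ≤ n → ∃ y : Set.Icc (0 : ℝ) 1, Function.minimalPeriod f y = n := by
  have hxp : x ∈ Function.periodicPts f := by
    rw [← Function.minimalPeriod_pos_iff_mem_periodicPts, hx]; norm_num
  have e1 : f^[1] x = f x := Function.iterate_one f ▸ rfl
  have e2 : f^[2] x = f (f x) := by
    rw [Function.iterate_succ_apply', Function.iterate_one]
  have hx3 : f (f (f x)) = x := by
    have h := Function.isPeriodicPt_minimalPeriod f x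
    rw [hx] at h
    have : f^[3] x = x := h
    rwa [Function.iterate_succ_apply', e2] at this
  have m1 : Function.minimalPeriod f (f x) = 3 := by
    have := Function.minimalPeriod_apply_iterate hxp 1
    rwa [hx, e1] at this
  have m2 : Function.minimalPeriod f (f (f x)) = 3 := by
    have := Function.minimalPeriod_apply_iterate hxp 2
    rwa [hx, e2] at this
  have inj := Function.iterate_injOn_Iio_minimalPeriod (f := f) (x := x)
  rw [hx] at inj
  have h01 : x ≠ f x := by
    intro h
    have := inj (show (0:ℕ) ∈ Iio 3 by norm_num) (show (1:ℕ) ∈ Iio 3 by norm_num)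
      (by simpa [e1] using h)
    omega
  have h02 : x ≠ f (f x) := by
    intro h
    have := inj (show (0:ℕ) ∈ Iio 3 by norm_num) (show (2:ℕ) ∈ Iio 3 by norm_num)
      (by simpa [e2] using h)
    omega
  have h12 : f x ≠ f (f x) := by
    intro h
    have := inj (show (1:ℕ) ∈ Iio 3 by norm_num) (show (2:ℕ) ∈ Iio 3 by norm_num)
      (by simpa [e1, e2] using h)
    omega
  have r01 : (x:ℝ) ≠ (f x : ℝ) := fun h => h01 (Subtype.ext h)
  have r02 : (x:ℝ) ≠ (f (f x) : ℝ) := fun h => h02 (Subtype.ext h)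
  have r12 : (f x : ℝ) ≠ (f (f x) : ℝ) := fun h => h12 (Subtype.ext h)
  rcases lt_trichotomy ((x:ℝ)) ((f x : ℝ)) with hA | hA | hA
  · rcases lt_trichotomy ((f x : ℝ)) ((f (f x) : ℝ)) with hB | hB | hB
    · -- x < f x < f²x : a=x,b=fx,c=f²x, case1
      exact geom f hf x (f x) (f (f x)) hA hB m1 (Or.inl ⟨rfl, rfl, hx3⟩)
    · exact absurd hB r12
    · rcases lt_trichotomy ((x:ℝ)) ((f (f x) : ℝ)) with hC | hC | hC
      ·
        exact geom f hf x (f (f x)) (f x) hC hB m2 (Or.inr ⟨rfl, rfl, hx3⟩)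
      · exact absurd hC r02
      · -- f²x < x < fx : a=f²x,b=x,c=fx, case1 : f a = b hx3, f b = c rfl, f c = a rfl
        exact geom f hf (f (f x)) x (f x) hC hA hx (Or.inl ⟨hx3, rfl, rfl⟩)
  · exact absurd hA r01
  · rcases lt_trichotomy ((f x : ℝ)) ((f (f x) : ℝ)) with hB | hB | hB
    · rcases lt_trichotomy ((x:ℝ)) ((f (f x) : ℝ)) with hC | hC | hC
      · -- fx < x < f²x : a=fx,b=x,c=f²x, case2 : f a = c rfl, f c = b hx3, f b = a rfl
        exact geom f hf (f x) x (f (f x)) hA hC hx (Or.inr ⟨rfl, hx3, rfl⟩)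
      · exact absurd hC r02
      · -- fx < f²x < x : a=fx,b=f²x,c=x, case1 : f a = b rfl, f b = c hx3, f c = a rfl
        exact geom f hf (f x) (f (f x)) x hB hC m2 (Or.inl ⟨rfl, hx3, rfl⟩)
    · exact absurd hB r12
    · -- f²x < fx < x : a=f²x,b=fx,c=x, case2 : f a = c hx3, f c = b rfl, f b = a rfl
      exact geom f hf (f (f x)) (f x) x hB hA m1 (Or.inr ⟨hx3, rfl, rfl⟩)
end

section
/- Let f : [0,1] → [0,1] be continuous. If the set of periodic points P(f) is closed, then every periodic point of f has period a power of 2. -/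
open Set Function

section Helpers

variable {F : ℝ → ℝ}

/-- If two points of `[a,b]` have images bracketing `[p,q]`, then `[p,q] ⊆ F '' [a,b]`. -/
lemma subset_image_of_two (hF : Continuous F) {a b x₁ x₂ p q : ℝ} (h₁ : x₁ ∈ Icc a b) (h₂ : x₂ ∈ Icc a b)
    (hpq : Icc p q ⊆ uIcc (F x₁) (F x₂)) : Icc p q ⊆ F '' Icc a b := by
  have h1 : uIcc (F x₁) (F x₂) ⊆ F '' uIcc x₁ x₂ := intermediate_value_uIcc hF.continuousOn
  have h2 : uIcc x₁ x₂ ⊆ Icc a b := by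
    rw [uIcc_eq_union]
    apply union_subset <;> apply Icc_subset_Icc
    · exact h₁.1
    · exact h₂.2
    · exact h₂.1
    · exact h₁.2
  exact hpq.trans (h1.trans (image_mono h2))

/-- Exact pull-back, oriented case: `F α = p`, `F β = q`, `α ≤ β`. -/
lemma pullback_aux (hF : Continuous F) {α β p q : ℝ} (hαβ : α ≤ β) (hFα : F α = p) (hFβ : F β = q)
    (hpq : p ≤ q) : ∃ a' b', α ≤ a' ∧ a' ≤ b' ∧ b' ≤ β ∧ F '' Icc a' b' = Icc p q := by
  classical
  set S : Set ℝ := {t | t ∈ Icc α β ∧ F t = q} with hS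
  have hScl : IsClosed S := (isClosed_Icc.inter (isClosed_eq hF continuous_const))
  have hSne : S.Nonempty := ⟨β, ⟨hαβ, le_refl β⟩, hFβ⟩
  have hSbdd : BddBelow S := ⟨α, fun t ht => ht.1.1⟩
  set b' := sInf S with hb'
  have hb'S : b' ∈ S := hScl.csInf_mem hSne hSbdd
  set T : Set ℝ := {t | t ∈ Icc α b' ∧ F t = p} with hT
  have hTcl : IsClosed T := (isClosed_Icc.inter (isClosed_eq hF continuous_const))
  have hTne : T.Nonempty := ⟨α, ⟨le_refl α, hb'S.1.1⟩, hFα⟩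
  have hTbdd : BddAbove T := ⟨b', fun t ht => ht.1.2⟩
  set a' := sSup T with ha'
  have ha'T : a' ∈ T := hTcl.csSup_mem hTne hTbdd
  refine ⟨a', b', ha'T.1.1, ha'T.1.2, hb'S.1.2, ?_⟩
  apply Subset.antisymm
  · rintro y ⟨t, ht, rfl⟩
    constructor
    · by_contra hlt
      push_neg at hlt
      have htne : t ≠ a' := by rintro rfl; rw [ha'T.2] at hlt; exact lt_irrefl _ hlt
      have ht2 : t ∈ Icc a' b' := ht
      have : p ∈ Icc (F t) (F b') := ⟨hlt.le, by rw [hb'S.2]; exact hpq⟩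
      obtain ⟨y, hy, hFy⟩ := intermediate_value_Icc ht2.2 hF.continuousOn this
      have hyT : y ∈ T := ⟨⟨ha'T.1.1.trans (ht2.1.trans hy.1), hy.2⟩, hFy⟩
      have : y ≤ a' := le_csSup hTbdd hyT
      have : t ≤ a' := hy.1.trans this
      exact htne (le_antisymm this ht2.1)
    · by_contra hlt
      push_neg at hlt
      have htne : t ≠ b' := by rintro rfl; rw [hb'S.2] at hlt; exact lt_irrefl _ hlt
      have ht2 : t ∈ Icc a' b' := ht
      have : q ∈ Icc (F a') (F t) := ⟨by rw [ha'T.2]; exact hpq, hlt.le⟩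
      obtain ⟨y, hy, hFy⟩ := intermediate_value_Icc ht2.1 hF.continuousOn this
      have hyS : y ∈ S := ⟨⟨ha'T.1.1.trans hy.1, (hy.2.trans ht2.2).trans hb'S.1.2⟩, hFy⟩
      have : b' ≤ y := csInf_le hSbdd hyS
      have : b' ≤ t := this.trans hy.2
      exact htne (le_antisymm ht2.2 this)
  · have := intermediate_value_Icc ha'T.1.2 (hF.continuousOn (s := Icc a' b'))
    rw [ha'T.2, hb'S.2] at this
    exact this

/-- Exact pull-back, reversed case: `F α = q`, `F β = p`, `α ≤ β`. -/
lemma pullback_aux' (hF : Continuous F) {α β p q : ℝ} (hαβ : α ≤ β) (hFα : F α = q) (hFβ : F β = p)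
    (hpq : p ≤ q) : ∃ a' b', α ≤ a' ∧ a' ≤ b' ∧ b' ≤ β ∧ F '' Icc a' b' = Icc p q := by
  classical
  set S : Set ℝ := {t | t ∈ Icc α β ∧ F t = q} with hS
  have hScl : IsClosed S := (isClosed_Icc.inter (isClosed_eq hF continuous_const))
  have hSne : S.Nonempty := ⟨α, ⟨le_refl _, hαβ⟩, hFα⟩
  have hSbdd : BddAbove S := ⟨β, fun t ht => ht.1.2⟩
  set a' := sSup S with ha'
  have ha'S : a' ∈ S := hScl.csSup_mem hSne hSbdd
  set T : Set ℝ := {t | t ∈ Icc a' β ∧ F t = p} with hT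
  have hTcl : IsClosed T := (isClosed_Icc.inter (isClosed_eq hF continuous_const))
  have hTne : T.Nonempty := ⟨β, ⟨ha'S.1.2, le_refl _⟩, hFβ⟩
  have hTbdd : BddBelow T := ⟨a', fun t ht => ht.1.1⟩
  set b' := sInf T with hb'
  have hb'T : b' ∈ T := hTcl.csInf_mem hTne hTbdd
  refine ⟨a', b', ha'S.1.1, hb'T.1.1, hb'T.1.2, ?_⟩
  apply Subset.antisymm
  · rintro y ⟨t, ht, rfl⟩
    constructor
    · by_contra hlt
      push_neg at hlt
      have htne : t ≠ b' := by rintro rfl; rw [hb'T.2] at hlt; exact lt_irrefl _ hlt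
      have ht2 : t ∈ Icc a' b' := ht
      have : p ∈ Icc (F t) (F a') := ⟨hlt.le, by rw [ha'S.2]; exact hpq⟩
      obtain ⟨y, hy, hFy⟩ := intermediate_value_Icc' ht2.1 hF.continuousOn this
      have hyT : y ∈ T := ⟨⟨hy.1, (hy.2.trans ht2.2).trans hb'T.1.2⟩, hFy⟩
      have : b' ≤ y := csInf_le hTbdd hyT
      have : b' ≤ t := this.trans hy.2
      exact htne (le_antisymm ht2.2 this)
    · by_contra hlt
      push_neg at hlt
      have htne : t ≠ a' := by rintro rfl; rw [ha'S.2] at hlt; exact lt_irrefl _ hlt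
      have ht2 : t ∈ Icc a' b' := ht
      have : q ∈ Icc (F b') (F t) := ⟨by rw [hb'T.2]; exact hpq, hlt.le⟩
      obtain ⟨y, hy, hFy⟩ := intermediate_value_Icc' ht2.2 hF.continuousOn this
      have hyS : y ∈ S := ⟨⟨ha'S.1.1.trans (ht2.1.trans hy.1), hy.2.trans hb'T.1.2⟩, hFy⟩
      have : y ≤ a' := le_csSup hSbdd hyS
      have : t ≤ a' := hy.1.trans this
      exact htne (le_antisymm this ht2.1)
  · have := intermediate_value_Icc' hb'T.1.1 (hF.continuousOn (s := Icc a' b'))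
    rw [ha'S.2, hb'T.2] at this
    exact this

/-- Exact pull-back. -/
lemma exists_pullback (hF : Continuous F) {a b p q : ℝ} (hab : a ≤ b) (hpq : p ≤ q)
    (hcov : Icc p q ⊆ F '' Icc a b) :
    ∃ a' b', a ≤ a' ∧ a' ≤ b' ∧ b' ≤ b ∧ F '' Icc a' b' = Icc p q := by
  obtain ⟨α, hα, hFα⟩ := hcov ⟨le_refl p, hpq⟩
  obtain ⟨β, hβ, hFβ⟩ := hcov ⟨hpq, le_refl q⟩
  rcases le_total α β with h | h
  · obtain ⟨a', b', h1, h2, h3, h4⟩ := pullback_aux hF h hFα hFβ hpq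
    exact ⟨a', b', hα.1.trans h1, h2, h3.trans hβ.2, h4⟩
  · obtain ⟨a', b', h1, h2, h3, h4⟩ := pullback_aux' hF h hFβ hFα hpq
    exact ⟨a', b', hβ.1.trans h1, h2, h3.trans hα.2, h4⟩

/-- A fixed point in an interval covering itself. -/
lemma exists_fixed (hF : Continuous F) {a b : ℝ} (hab : a ≤ b) (hcov : Icc a b ⊆ F '' Icc a b) :
    ∃ x ∈ Icc a b, F x = x := by
  obtain ⟨α, hα, hFα⟩ := hcov ⟨le_refl a, hab⟩
  obtain ⟨β, hβ, hFβ⟩ := hcov ⟨hab, le_refl b⟩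
  have hφ : ContinuousOn (fun x => F x - x) (uIcc α β) :=
    (hF.sub continuous_id).continuousOn
  have h0 : (0:ℝ) ∈ uIcc (F α - α) (F β - β) := by
    rw [mem_uIcc]
    left
    constructor
    · rw [hFα]; linarith [hα.1]
    · rw [hFβ]; linarith [hβ.2]
  obtain ⟨x, hx, hFx⟩ := intermediate_value_uIcc hφ h0
  refine ⟨x, ?_, by linarith [sub_eq_zero.mp hFx] ⟩
  have : uIcc α β ⊆ Icc a b := by
    rw [uIcc_eq_union]
    apply union_subset <;> apply Icc_subset_Icc
    · exact hα.1
    · exact hβ.2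
    · exact hβ.1
    · exact hα.2
  exact this hx

end Helpers
section Chain

variable {F : ℝ → ℝ}

/-- Follow a chain of covering intervals exactly. -/
lemma chain_follow (hF : Continuous F) (J : ℕ → ℝ × ℝ) (hJ : ∀ i, (J i).1 ≤ (J i).2)
    (hcov : ∀ i, Icc (J (i+1)).1 (J (i+1)).2 ⊆ F '' Icc (J i).1 (J i).2) :
    ∀ N, ∃ u v, u ≤ v ∧ Icc u v ⊆ Icc (J 0).1 (J 0).2 ∧
      F^[N] '' Icc u v = Icc (J N).1 (J N).2 ∧
      ∀ i ≤ N, F^[i] '' Icc u v ⊆ Icc (J i).1 (J i).2 := by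
  intro N
  induction N with
  | zero =>
    refine ⟨(J 0).1, (J 0).2, hJ 0, le_refl _, by simp, ?_⟩
    intro i hi
    interval_cases i
    simp
  | succ N ih =>
    obtain ⟨u, v, huv, hsub, hexact, hall⟩ := ih
    have hiter : Continuous (F^[N+1]) := hF.iterate _
    have hcovN : Icc (J (N+1)).1 (J (N+1)).2 ⊆ F^[N+1] '' Icc u v := by
      have h1 : F^[N+1] '' Icc u v = F '' (F^[N] '' Icc u v) := by
        rw [Function.iterate_succ', Set.image_comp]
      rw [h1, hexact]
      exact hcov N
    obtain ⟨u', v', h1, h2, h3, h4⟩ := exists_pullback hiter huv (hJ (N+1)) hcovN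
    refine ⟨u', v', h2, (Icc_subset_Icc h1 h3).trans hsub, h4, ?_⟩
    intro i hi
    rcases Nat.lt_or_ge i (N+1) with h | h
    · exact (Set.image_mono (Icc_subset_Icc h1 h3)).trans (hall i (Nat.lt_succ_iff.mp h))
    · have : i = N + 1 := le_antisymm hi h
      subst this
      rw [h4]
  
/-- From a chain whose `N`-th interval covers the initial one, get a periodic point
    realizing the itinerary. -/
lemma chain_periodic (hF : Continuous F) (J : ℕ → ℝ × ℝ) (hJ : ∀ i, (J i).1 ≤ (J i).2)
    (hcov : ∀ i, Icc (J (i+1)).1 (J (i+1)).2 ⊆ F '' Icc (J i).1 (J i).2)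
    (N : ℕ) (hNJ : J N = J 0) :
    ∃ x, F^[N] x = x ∧ ∀ i ≤ N, F^[i] x ∈ Icc (J i).1 (J i).2 := by
  obtain ⟨u, v, huv, hsub, hexact, hall⟩ := chain_follow hF J hJ hcov N
  have hcov2 : Icc u v ⊆ F^[N] '' Icc u v := by
    rw [hexact, hNJ]
    exact hsub
  obtain ⟨x, hx, hFx⟩ := exists_fixed (hF.iterate N) huv hcov2
  exact ⟨x, hFx, fun i hi => hall i hi ⟨x, hx, rfl⟩⟩

/-- The two-sided disjoint horseshoe construction from a fixed point with both side
    intervals covering everything. -/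
lemma horseshoe (hF : Continuous F) {c z d : ℝ} (hcz : c < z) (hzd : z < d)
    (hz : F z = z) (hcovL : Icc c d ⊆ F '' Icc c z) (hcovR : Icc c d ⊆ F '' Icc z d) :
    ∃ a₁ a₂ b₁ b₂ : ℝ, c ≤ a₁ ∧ a₁ ≤ a₂ ∧ a₂ < z ∧ z < b₁ ∧ b₁ ≤ b₂ ∧ b₂ ≤ d ∧
      Icc z d ⊆ F '' Icc a₁ a₂ ∧ Icc c z ⊆ F '' Icc b₁ b₂ := by
  -- left side
  obtain ⟨tb, htb, hFtb⟩ := hcovL ⟨hcz.le.trans hzd.le, le_refl d⟩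
  have htbz : tb < z := by
    rcases lt_or_eq_of_le htb.2 with h | h
    · exact h
    · exfalso; rw [h, hz] at hFtb; exact absurd hFtb hzd.ne
  have hA : ∃ a₁ a₂, c ≤ a₁ ∧ a₁ ≤ a₂ ∧ a₂ < z ∧ Icc z d ⊆ F '' Icc a₁ a₂ := by
    by_cases hcase : ∃ p, p ∈ Icc tb z ∧ p < z ∧ F p ≤ z
    · obtain ⟨p, hp, hpz, hFp⟩ := hcase
      refine ⟨tb, p, htb.1, hp.1, hpz, ?_⟩
      apply subset_image_of_two hF (x₁ := tb) (x₂ := p)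
      · exact ⟨le_refl _, hp.1⟩
      · exact ⟨hp.1, le_refl _⟩
      · rw [hFtb]
        intro t ht
        rw [Set.mem_uIcc]
        right
        exact ⟨hFp.trans ht.1, ht.2⟩
    · push_neg at hcase
      obtain ⟨ta, hta, hFta⟩ := hcovL ⟨le_refl c, hcz.le.trans hzd.le⟩
      have htaz : ta < z := by
        rcases lt_or_eq_of_le hta.2 with h | h
        · exact h
        · exfalso; rw [h, hz] at hFta; exact absurd hFta.symm hcz.ne
      have htatb : ta < tb := by
        by_contra hle
        push_neg at hle
        have := hcase ta ⟨hle, htaz.le⟩ htaz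
        rw [hFta] at this
        exact absurd this (not_lt.mpr hcz.le)
      refine ⟨ta, tb, hta.1, htatb.le, htbz, ?_⟩
      apply subset_image_of_two hF (x₁ := ta) (x₂ := tb)
      · exact ⟨le_refl _, htatb.le⟩
      · exact ⟨htatb.le, le_refl _⟩
      · rw [hFta, hFtb]
        intro t ht
        rw [Set.mem_uIcc]
        left
        exact ⟨hcz.le.trans ht.1, ht.2⟩
  -- right side
  obtain ⟨tc, htc, hFtc⟩ := hcovR ⟨le_refl c, hcz.le.trans hzd.le⟩
  have htcz : z < tc := by
    rcases lt_or_eq_of_le htc.1 with h | h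
    · exact h
    · exfalso; rw [← h, hz] at hFtc; exact absurd hFtc.symm hcz.ne
  have hB : ∃ b₁ b₂, z < b₁ ∧ b₁ ≤ b₂ ∧ b₂ ≤ d ∧ Icc c z ⊆ F '' Icc b₁ b₂ := by
    by_cases hcase : ∃ p, p ∈ Icc z tc ∧ z < p ∧ z ≤ F p
    · obtain ⟨p, hp, hpz, hFp⟩ := hcase
      refine ⟨p, tc, hpz, hp.2, htc.2, ?_⟩
      apply subset_image_of_two hF (x₁ := p) (x₂ := tc)
      · exact ⟨le_refl _, hp.2⟩
      · exact ⟨hp.2, le_refl _⟩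
      · rw [hFtc]
        intro t ht
        rw [Set.mem_uIcc]
        right
        exact ⟨ht.1, ht.2.trans hFp⟩
    · push_neg at hcase
      obtain ⟨td, htd, hFtd⟩ := hcovR ⟨hcz.le.trans hzd.le, le_refl d⟩
      have htdz : z < td := by
        rcases lt_or_eq_of_le htd.1 with h | h
        · exact h
        · exfalso; rw [← h, hz] at hFtd; exact absurd hFtd hzd.ne
      have htctd : tc < td := by
        by_contra hle
        push_neg at hle
        have := hcase td ⟨htdz.le, hle⟩ htdz
        rw [hFtd] at this
        exact absurd this (not_lt.mpr hzd.le)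
      refine ⟨tc, td, htcz, htctd.le, htd.2, ?_⟩
      apply subset_image_of_two hF (x₁ := tc) (x₂ := td)
      · exact ⟨le_refl _, htctd.le⟩
      · exact ⟨htctd.le, le_refl _⟩
      · rw [hFtc, hFtd]
        intro t ht
        rw [Set.mem_uIcc]
        left
        exact ⟨ht.1, ht.2.trans hzd.le⟩
  obtain ⟨a₁, a₂, h1, h2, h3, h4⟩ := hA
  obtain ⟨b₁, b₂, h5, h6, h7, h8⟩ := hB
  exact ⟨a₁, a₂, b₁, b₂, h1, h2, h3, h5, h6, h7, h4, h8⟩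

end Chain
section Orbit

variable {G : ℝ → ℝ}

lemma odd_orbit_horseshoe (hF : Continuous G) {y : ℝ} {q : ℕ} (hq3 : 3 ≤ q) (hqodd : Odd q)
    (hper : G^[q] y = y) (hGy : G y ≠ y) :
    ∃ c z d N, 1 ≤ N ∧ c < z ∧ z < d ∧ G z = z ∧
      (∃ i, G^[i] y = c) ∧ (∃ i, G^[i] y = d) ∧
      Icc c d ⊆ G^[N] '' Icc c z ∧ Icc c d ⊆ G^[N] '' Icc z d := by
  classical
  have hq0 : 0 < q := by omega
  set O : Finset ℝ := (Finset.range q).image (fun j => G^[j] y) with hO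
  have hOne : O.Nonempty := ⟨y, Finset.mem_image.mpr ⟨0, Finset.mem_range.mpr hq0, rfl⟩⟩
  have horb : ∀ w ∈ O, ∃ i, G^[i] y = w := by
    intro w hw
    obtain ⟨j, _, hj⟩ := Finset.mem_image.mp hw
    exact ⟨j, hj⟩
  have hperiodic : IsPeriodicPt G q y := hper
  have hmod : ∀ n, G^[n] y = G^[n % q] y := fun n => (hperiodic.iterate_mod_apply n).symm
  have hOcl : ∀ w ∈ O, G w ∈ O := by
    intro w hw
    obtain ⟨j, hjq, hj⟩ := Finset.mem_image.mp hw
    rw [Finset.mem_range] at hjq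
    refine Finset.mem_image.mpr ⟨(j+1) % q, Finset.mem_range.mpr (Nat.mod_lt _ hq0), ?_⟩
    rw [← hmod, Function.iterate_succ_apply', hj]
  have hperO : ∀ w ∈ O, G^[q] w = w := by
    intro w hw
    obtain ⟨i, _, hi⟩ := Finset.mem_image.mp hw
    rw [← hi, ← Function.iterate_add_apply, Nat.add_comm, Function.iterate_add_apply, hper]
  have hfix : ∀ w ∈ O, G w ≠ w := by
    intro w hw hGw
    obtain ⟨j, hjq, hj⟩ := Finset.mem_image.mp hw
    rw [Finset.mem_range] at hjq
    have hyw : y = w := by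
      have h1 : G^[q] y = G^[q - j] (G^[j] y) := by
        rw [← Function.iterate_add_apply, Nat.sub_add_cancel hjq.le]
      rw [hj] at h1
      have h2 : G^[q - j] w = w := Function.iterate_fixed hGw _
      rw [h2] at h1
      rw [← hper, h1]
    rw [← hyw] at hGw
    exact hGy hGw
  -- the crossing pair c < d
  set U : Finset ℝ := O.filter (fun w => w < G w) with hU
  have hUne : U.Nonempty := by
    refine ⟨O.min' hOne, Finset.mem_filter.mpr ⟨O.min'_mem hOne, ?_⟩⟩
    have h1 : G (O.min' hOne) ∈ O := hOcl _ (O.min'_mem hOne)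
    have h2 := O.min'_le _ h1
    have h3 := hfix _ (O.min'_mem hOne)
    exact lt_of_le_of_ne h2 (Ne.symm h3)
  set c := U.max' hUne with hc
  have hcU : c ∈ U := U.max'_mem hUne
  have hcO : c ∈ O := (Finset.mem_filter.mp hcU).1
  have hcGc : c < G c := (Finset.mem_filter.mp hcU).2
  set V : Finset ℝ := O.filter (fun w => c < w) with hV
  have hVne : V.Nonempty := ⟨G c, Finset.mem_filter.mpr ⟨hOcl _ hcO, hcGc⟩⟩
  set d := V.min' hVne with hd
  have hdV : d ∈ V := V.min'_mem hVne
  have hdO : d ∈ O := (Finset.mem_filter.mp hdV).1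
  have hcd : c < d := (Finset.mem_filter.mp hdV).2
  have hdGc : d ≤ G c := V.min'_le _ (Finset.mem_filter.mpr ⟨hOcl _ hcO, hcGc⟩)
  have hGdc : G d ≤ c := by
    have h1 : G d ∈ O := hOcl _ hdO
    have h2 : G d ≠ d := hfix _ hdO
    have h3 : G d < d := by
      rcases lt_or_gt_of_ne h2 with h | h
      · exact h
      · exfalso
        have : d ∈ U := Finset.mem_filter.mpr ⟨hdO, h⟩
        exact absurd hcd (not_lt.mpr (U.le_max' _ this))
    by_contra hcon
    push_neg at hcon
    have : G d ∈ V := Finset.mem_filter.mpr ⟨h1, hcon⟩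
    exact absurd h3 (not_lt.mpr (V.min'_le _ this))
  -- fixed point z strictly between c and d
  obtain ⟨z, hzIcc, hzfix⟩ : ∃ z ∈ Icc c d, G z = z := by
    have hcont : ContinuousOn (fun x => G x - x) (Icc c d) := (hF.sub continuous_id).continuousOn
    have h0 : (0:ℝ) ∈ Icc (G d - d) (G c - c) :=
      ⟨by linarith [hGdc.trans_lt hcd], by linarith [hcd.trans_le hdGc]⟩
    obtain ⟨z, hz, hz0⟩ := intermediate_value_Icc' hcd.le hcont h0
    exact ⟨z, hz, by linarith [sub_eq_zero.mp hz0]⟩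
  have hcz : c < z := by
    rcases lt_or_eq_of_le hzIcc.1 with h | h
    · exact h
    · exfalso; rw [← h] at hzfix; exact absurd hzfix (ne_of_gt hcGc)
  have hzd : z < d := by
    rcases lt_or_eq_of_le hzIcc.2 with h | h
    · exact h
    · exfalso; rw [h] at hzfix; exact absurd hzfix (ne_of_lt (hGdc.trans_lt hcd))
  -- one-step coverings
  have hziter : ∀ n, G^[n] z = z := fun n => Function.iterate_fixed hzfix n
  have cov1 : Icc z d ⊆ G '' Icc c z := by
    have h2 : Icc z d ⊆ uIcc (G c) (G z) := by
      intro t ht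
      rw [hzfix, Set.mem_uIcc]
      right
      exact ⟨ht.1, ht.2.trans hdGc⟩
    have := subset_image_of_two (F := G) hF (a := c) (b := z)
      ⟨le_refl c, hcz.le⟩ ⟨hcz.le, le_refl z⟩ h2
    exact this
  have cov2 : Icc c z ⊆ G '' Icc z d := by
    have h2 : Icc c z ⊆ uIcc (G z) (G d) := by
      intro t ht
      rw [hzfix, Set.mem_uIcc]
      right
      exact ⟨hGdc.trans ht.1, ht.2⟩
    exact subset_image_of_two (F := G) hF (a := z) (b := d)
      ⟨le_refl z, hzd.le⟩ ⟨hzd.le, le_refl d⟩ h2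
  -- two-step self-coverings and monotonicity along even times
  have hS2 : Icc c z ⊆ G^[2] '' Icc c z := by
    have : G^[2] '' Icc c z = G '' (G '' Icc c z) := by
      rw [show (2:ℕ) = 1 + 1 from rfl, Function.iterate_add, Function.iterate_one, Set.image_comp]
    rw [this]
    exact cov2.trans (Set.image_mono cov1)
  have hT2 : Icc z d ⊆ G^[2] '' Icc z d := by
    have : G^[2] '' Icc z d = G '' (G '' Icc z d) := by
      rw [show (2:ℕ) = 1 + 1 from rfl, Function.iterate_add, Function.iterate_one, Set.image_comp]
    rw [this]
    exact cov1.trans (Set.image_mono cov2)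
  have hmono : ∀ (X : Set ℝ), X ⊆ G^[2] '' X → ∀ n k, G^[n] '' X ⊆ G^[n + 2*k] '' X := by
    intro X hX n k
    induction k with
    | zero => simp
    | succ k ih =>
      have h1 : G^[n + 2*(k+1)] '' X = G^[n + 2*k] '' (G^[2] '' X) := by
        rw [show n + 2*(k+1) = (n + 2*k) + 2 by ring, Function.iterate_add, Set.image_comp]
      rw [h1]
      exact ih.trans (Set.image_mono hX)
  -- reaching every orbit point at even times
  have heven : ∀ w₀ ∈ O, ∀ w ∈ O, ∃ n, Even n ∧ G^[n] w₀ = w := by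
    intro w₀ hw₀ w hw
    obtain ⟨i, hiq, hi⟩ := Finset.mem_image.mp hw₀
    obtain ⟨l, hlq, hl⟩ := Finset.mem_image.mp hw
    rw [Finset.mem_range] at hiq hlq
    set j := (l + q - i) % q with hj
    have hstep : G^[j] w₀ = w := by
      rw [← hi, ← Function.iterate_add_apply, ← hl]
      rw [hmod (j + i)]
      congr 1
      rw [hj, Nat.mod_add_mod, Nat.sub_add_cancel (by omega), Nat.add_mod_right,
        Nat.mod_eq_of_lt hlq]
    have hqper : G^[q] w₀ = w₀ := hperO _ hw₀
    rcases Nat.even_or_odd j with hpar | hpar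
    · exact ⟨j, hpar, hstep⟩
    · refine ⟨j + q, ?_, ?_⟩
      · exact hpar.add_odd hqodd
      · rw [Function.iterate_add_apply, hqper, hstep]
  set m := O.min' hOne with hm
  set M := O.max' hOne with hM
  obtain ⟨n₁, hn₁e, hn₁⟩ := heven c hcO m (O.min'_mem hOne)
  obtain ⟨n₂, hn₂e, hn₂⟩ := heven c hcO M (O.max'_mem hOne)
  obtain ⟨n₃, hn₃e, hn₃⟩ := heven d hdO m (O.min'_mem hOne)
  obtain ⟨n₄, hn₄e, hn₄⟩ := heven d hdO M (O.max'_mem hOne)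
  set N := n₁ + n₂ + n₃ + n₄ with hN
  have hNe : Even N := by
    have := (hn₁e.add hn₂e).add hn₃e
    exact this.add hn₄e
  have hN1 : 1 ≤ N := by
    by_contra hcon
    push_neg at hcon
    interval_cases N
    · have : n₂ = 0 := by omega
      rw [this] at hn₂
      simp at hn₂
      have : d ≤ M := O.le_max' _ hdO
      rw [← hn₂] at this
      exact absurd hcd (not_lt.mpr this)
  have hsplit : ∀ n', Even n' → n' ≤ N → ∃ k, N = n' + 2 * k := by
    intro n' he hle
    have h1 : Even (N - n') := (Nat.even_sub hle).mpr (by simp [hNe, he])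
    obtain ⟨k, hk⟩ := h1
    exact ⟨k, by omega⟩
  have hIccmM : Icc c d ⊆ Icc m M := Icc_subset_Icc (O.min'_le _ hcO) (O.le_max' _ hdO)
  have hmem_even : ∀ (X : Set ℝ) (x₀ : ℝ), x₀ ∈ X → X ⊆ G^[2] '' X →
      ∀ n', Even n' → n' ≤ N → ∀ w, G^[n'] x₀ = w → w ∈ G^[N] '' X := by
    intro X x₀ hx₀ hX n' he hle w hw
    obtain ⟨k, hk⟩ := hsplit n' he hle
    rw [hk]
    exact hmono X hX n' k ⟨x₀, hx₀, hw⟩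
  have hccz : c ∈ Icc c z := ⟨le_refl c, hcz.le⟩
  have hdzd : d ∈ Icc z d := ⟨hzd.le, le_refl d⟩
  have hzcz : z ∈ Icc c z := ⟨hcz.le, le_refl z⟩
  have hzzd : z ∈ Icc z d := ⟨le_refl z, hzd.le⟩
  have hconn : ∀ n (X : Set ℝ), IsPreconnected X → IsPreconnected (G^[n] '' X) :=
    fun n X hX => hX.image _ (hF.iterate n).continuousOn
  have covL : Icc c d ⊆ G^[N] '' Icc c z := by
    have hmm : m ∈ G^[N] '' Icc c z :=
      hmem_even _ c hccz hS2 n₁ hn₁e (by omega) m hn₁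
    have hMM : M ∈ G^[N] '' Icc c z :=
      hmem_even _ c hccz hS2 n₂ hn₂e (by omega) M hn₂
    have := (hconn N _ isPreconnected_Icc).Icc_subset hmm hMM
    exact hIccmM.trans this
  have covR : Icc c d ⊆ G^[N] '' Icc z d := by
    have hmm : m ∈ G^[N] '' Icc z d :=
      hmem_even _ d hdzd hT2 n₃ hn₃e (by omega) m hn₃
    have hMM : M ∈ G^[N] '' Icc z d :=
      hmem_even _ d hdzd hT2 n₄ hn₄e (by omega) M hn₄
    have := (hconn N _ isPreconnected_Icc).Icc_subset hmm hMM
    exact hIccmM.trans this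
  exact ⟨c, z, d, N, hN1, hcz, hzd, hzfix, horb c hcO, horb d hdO, covL, covR⟩

end Orbit
section Symbolic

variable {H : ℝ → ℝ}

/-- The symbolic-dynamics contradiction: a strict two-interval horseshoe plus a closed
set of "periodic points" is impossible. -/
lemma horseshoe_contradiction (hF : Continuous H) {a₁ a₂ b₁ b₂ lo hi : ℝ}
    (ha : a₁ ≤ a₂) (hb : b₁ ≤ b₂) (hdisj : a₂ < b₁)
    (hA : Icc a₁ a₂ ⊆ Icc lo hi) (hB : Icc b₁ b₂ ⊆ Icc lo hi)
    (hcovA : Icc lo hi ⊆ H '' Icc a₁ a₂) (hcovB : Icc lo hi ⊆ H '' Icc b₁ b₂)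
    (PS : Set ℝ) (hPScl : IsClosed PS)
    (hPSin : ∀ x (P : ℕ), 1 ≤ P → H^[P] x = x → x ∈ Icc lo hi → x ∈ PS)
    (hPSout : ∀ x ∈ PS, ∃ p, 1 ≤ p ∧ H^[p] x = x) : False := by
  classical
  set s : ℕ → Prop := fun i => ∃ mm, i = 2^mm with hs
  set C : ℕ → ℝ × ℝ := fun i => if s i then (a₁, a₂) else (b₁, b₂) with hC
  have hCJ : ∀ i, (C i).1 ≤ (C i).2 := by
    intro i; by_cases h : s i <;> simp [hC, h, ha, hb]
  have hCsub : ∀ i, Icc (C i).1 (C i).2 ⊆ Icc lo hi := by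
    intro i; by_cases h : s i <;> simp [hC, h, hA, hB]
  have hCcov : ∀ i j, Icc (C j).1 (C j).2 ⊆ H '' Icc (C i).1 (C i).2 := by
    intro i j
    refine (hCsub j).trans ?_
    by_cases h : s i <;> simp [hC, h, hcovA, hcovB]
  have hex : ∀ N', ∃ x, H^[N'+1] x = x ∧ ∀ i ≤ N', H^[i] x ∈ Icc (C i).1 (C i).2 := by
    intro N'
    obtain ⟨x, hx1, hx2⟩ := chain_periodic hF (fun i => C (i % (N'+1))) (fun i => hCJ _)
      (fun i => hCcov _ _) (N'+1) (by simp)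
    refine ⟨x, hx1, fun i hi => ?_⟩
    have := hx2 i (by omega)
    simp only [Nat.mod_eq_of_lt (show i < N' + 1 by omega)] at this
    exact this
  choose qq hqq1 hqq2 using hex
  have hqq_mem : ∀ N', qq N' ∈ Icc lo hi := by
    intro N'
    have h0 := hqq2 N' 0 (Nat.zero_le _)
    simpa using hCsub 0 h0
  have hqqPS : ∀ N', qq N' ∈ PS :=
    fun N' => hPSin _ (N'+1) (by omega) (hqq1 N') (hqq_mem N')
  set CS : ℕ → Set ℝ := fun l => ⋂ (i : ℕ), ⋂ (_ : i < l), (H^[i]) ⁻¹' (Icc (C i).1 (C i).2)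
    with hCS
  have hCScl : ∀ l, IsClosed (CS l) :=
    fun l => isClosed_iInter fun i => isClosed_iInter fun _ =>
      isClosed_Icc.preimage (hF.iterate i)
  have hqqCS : ∀ l N', l ≤ N' → qq N' ∈ CS l := by
    intro l N' hl
    rw [hCS]
    simp only [Set.mem_iInter]
    intro i hi
    exact hqq2 N' i (by omega)
  set DS : ℕ → Set ℝ := fun l => closure (qq '' {N' | l ≤ N'}) with hDS
  have hDSne : ∀ l, (DS l).Nonempty := fun l => ⟨qq l, subset_closure ⟨l, le_refl l, rfl⟩⟩
  have hDSdec : ∀ l, DS (l+1) ⊆ DS l :=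
    fun l => closure_mono (Set.image_mono (fun N' h => by simp at h ⊢; omega))
  have hDScl : ∀ l, IsClosed (DS l) := fun l => isClosed_closure
  have hDS0 : IsCompact (DS 0) := by
    apply IsCompact.of_isClosed_subset (isCompact_Icc (a := lo) (b := hi)) isClosed_closure
    apply closure_minimal _ isClosed_Icc
    rintro _ ⟨N', _, rfl⟩
    exact hqq_mem N'
  obtain ⟨zl, hzl⟩ := IsCompact.nonempty_iInter_of_sequence_nonempty_isCompact_isClosed
    DS hDSdec hDSne hDS0 hDScl
  have hzl_mem : ∀ l, zl ∈ DS l := fun l => Set.mem_iInter.mp hzl l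
  have hzlCS : ∀ i, H^[i] zl ∈ Icc (C i).1 (C i).2 := by
    intro i
    have h1 : DS (i+1) ⊆ CS (i+1) := by
      apply closure_minimal _ (hCScl (i+1))
      rintro _ ⟨N', hN', rfl⟩
      exact hqqCS (i+1) N' hN'
    have h2 := h1 (hzl_mem (i+1))
    rw [hCS] at h2
    simp only [Set.mem_iInter] at h2
    exact h2 i (by omega)
  have hzlPS : zl ∈ PS := by
    have h1 : DS 0 ⊆ PS := by
      rw [← hPScl.closure_eq]
      apply closure_mono
      rintro _ ⟨N', _, rfl⟩
      exact hqqPS N'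
    exact h1 (hzl_mem 0)
  obtain ⟨p, hp1, hpfix⟩ := hPSout zl hzlPS
  have hsj : s (2^p) := ⟨p, rfl⟩
  have hsjp : ¬ s (2^p + p) := by
    rintro ⟨mm, hmm⟩
    have h1 : p < 2^p := Nat.lt_two_pow_self (n := p)
    have h2 : 2^p < 2^mm := by omega
    have h3 : p < mm := (Nat.pow_lt_pow_iff_right (by norm_num)).mp h2
    have h4 : 2^(p+1) ≤ 2^mm := Nat.pow_le_pow_right (by norm_num) (by omega)
    have h5 : 2^(p+1) = 2^p + 2^p := by ring
    omega
  have hCA : C (2^p) = (a₁, a₂) := by simp only [hC]; rw [if_pos hsj]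
  have hCB : C (2^p + p) = (b₁, b₂) := by simp only [hC]; rw [if_neg hsjp]
  have h1 : H^[2^p] zl ∈ Icc a₁ a₂ := by
    have := hzlCS (2^p)
    rw [hCA] at this
    exact this
  have h2 : H^[2^p + p] zl ∈ Icc b₁ b₂ := by
    have := hzlCS (2^p + p)
    rw [hCB] at this
    exact this
  have h3 : H^[2^p + p] zl = H^[2^p] zl := by
    rw [Function.iterate_add_apply, hpfix]
  rw [h3] at h2
  exact absurd (h2.1.trans h1.2) (not_le.mpr hdisj)
  
end Symbolic
theorem sharkovskii_closed_periodic_power_of_two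
    (f : Set.Icc (0 : ℝ) 1 → Set.Icc (0 : ℝ) 1) (hf : Continuous f)
    (hP : IsClosed {x | ∃ p > 0, f^[p] x = x}) :
    ∀ x, (∃ p > 0, f^[p] x = x) → ∃ k : ℕ, Function.minimalPeriod f x = 2 ^ k := by
  intro x hx
  classical
  set F : ℝ → ℝ := fun r => ((f (Set.projIcc 0 1 zero_le_one r)) : ℝ) with hFdef
  have hFc : Continuous F := continuous_subtype_val.comp (hf.comp continuous_projIcc)
  have hFval : ∀ (t : Set.Icc (0:ℝ) 1), F t.val = (f t).val := by
    intro t; simp [hFdef, Set.projIcc_val]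
  have hiter : ∀ (t : Set.Icc (0:ℝ) 1) (n : ℕ), F^[n] t.val = (f^[n] t).val := by
    intro t n
    induction n generalizing t with
    | zero => simp
    | succ n ih =>
      rw [Function.iterate_succ_apply, Function.iterate_succ_apply, hFval, ih]
  set PS : Set ℝ := Subtype.val '' {u : Set.Icc (0:ℝ) 1 | ∃ p > 0, f^[p] u = u} with hPSdef
  have hPScl : IsClosed PS :=
    ((isClosed_Icc (a := (0:ℝ)) (b := 1)).isClosedEmbedding_subtypeVal).isClosedMap _ hP
  have hPSin : ∀ r, r ∈ Set.Icc (0:ℝ) 1 → ∀ P : ℕ, 1 ≤ P → F^[P] r = r → r ∈ PS := by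
    intro r hr P hP1 hFP
    refine ⟨⟨r, hr⟩, ⟨P, by omega, ?_⟩, rfl⟩
    apply Subtype.ext
    rw [← hiter]
    exact hFP
  have hPSout : ∀ r ∈ PS, ∃ p, 1 ≤ p ∧ F^[p] r = r := by
    rintro r ⟨u, ⟨p, hp0, hup⟩, rfl⟩
    refine ⟨p, by omega, ?_⟩
    rw [hiter, hup]
  -- decompose the minimal period
  set p₀ := Function.minimalPeriod f x with hp₀
  obtain ⟨pp, hpp0, hppx⟩ := hx
  have hper : Function.IsPeriodicPt f pp x := hppx
  have hp₀pos : 0 < p₀ := Function.IsPeriodicPt.minimalPeriod_pos hpp0 hper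
  set k := p₀.factorization 2 with hk
  set m' := p₀ / 2^k with hm'
  have hfact : 2^k * m' = p₀ := Nat.ordProj_mul_ordCompl_eq_self p₀ 2
  have hm'nd : ¬ 2 ∣ m' := Nat.not_dvd_ordCompl Nat.prime_two (by omega)
  by_cases hm'1 : m' = 1
  · exact ⟨k, by rw [hm'1] at hfact; omega⟩
  · exfalso
    have h2k1 : 1 ≤ 2^k := Nat.one_le_two_pow
    have hm'0 : m' ≠ 0 := by intro h; rw [h] at hfact; omega
    have hmod2 : m' % 2 = 1 := by
      rcases Nat.mod_two_eq_zero_or_one m' with h | h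
      · exact absurd (Nat.dvd_of_mod_eq_zero h) hm'nd
      · exact h
    have hm'3 : 3 ≤ m' := by
      clear_value k m'
      omega
    have hm'odd : Odd m' := Nat.odd_iff.mpr hmod2
    set G : ℝ → ℝ := F^[2^k] with hG
    have hGc : Continuous G := hFc.iterate _
    set y : ℝ := (x : ℝ) with hy
    have hGq : G^[m'] y = y := by
      have h1 : f^[p₀] x = x := Function.iterate_minimalPeriod
      have h2 : F^[p₀] y = y := by rw [hy, hiter, h1]
      rw [hG, ← Function.iterate_mul, hfact]
      exact h2
    have hGy : G y ≠ y := by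
      intro hcon
      have h1 : f^[2^k] x = x := by
        apply Subtype.ext
        rw [← hiter]
        exact hcon
      have h2 : p₀ ∣ 2^k := Function.IsPeriodicPt.minimalPeriod_dvd h1
      have h3 : p₀ ≤ 2^k := Nat.le_of_dvd (by positivity) h2
      have h5 : 2^k * 3 ≤ 2^k * m' := Nat.mul_le_mul_left _ hm'3
      omega
    obtain ⟨c, z, d, N, hN1, hcz, hzd, hzfix, ⟨ic, hic⟩, ⟨id', hid⟩, covL, covR⟩ :=
      odd_orbit_horseshoe hGc hm'3 hm'odd hGq hGy
    set hN : ℝ → ℝ := G^[N] with hhN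
    have hhNc : Continuous hN := hGc.iterate _
    have hzN : hN z = z := Function.iterate_fixed hzfix _
    obtain ⟨a₁, a₂, b₁, b₂, h1, h2, h3, h4, h5, h6, hAcov, hBcov⟩ :=
      horseshoe hhNc hcz hzd hzN covL covR
    set HH : ℝ → ℝ := hN^[2] with hHHdef
    have hHHc : Continuous HH := hhNc.iterate _
    have hHH2 : ∀ (X : Set ℝ), HH '' X = hN '' (hN '' X) := by
      intro X
      rw [hHHdef, show (2:ℕ) = 1 + 1 from rfl, Function.iterate_add, Function.iterate_one,
        Set.image_comp]
    have covA2 : Icc c d ⊆ HH '' Icc a₁ a₂ := by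
      rw [hHH2]
      exact covR.trans (Set.image_mono hAcov)
    have covB2 : Icc c d ⊆ HH '' Icc b₁ b₂ := by
      rw [hHH2]
      exact covL.trans (Set.image_mono hBcov)
    have hmem01 : ∀ i, G^[i] y ∈ Set.Icc (0:ℝ) 1 := by
      intro i
      have heq : G^[i] y = ((f^[2^k * i] x : Set.Icc (0:ℝ) 1) : ℝ) := by
        rw [hG, ← Function.iterate_mul, hy, hiter]
      rw [heq]
      exact (f^[2^k*i] x).2
    have hc01 : c ∈ Set.Icc (0:ℝ) 1 := by rw [← hic]; exact hmem01 ic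
    have hd01 : d ∈ Set.Icc (0:ℝ) 1 := by rw [← hid]; exact hmem01 id'
    have hHHiter : ∀ P : ℕ, HH^[P] = F^[2^k * N * 2 * P] := by
      intro P
      rw [show 2^k * N * 2 * P = 2^k * (N * (2 * P)) by ring, Function.iterate_mul,
        Function.iterate_mul, Function.iterate_mul]
    have hPSin' : ∀ r (P : ℕ), 1 ≤ P → HH^[P] r = r → r ∈ Icc c d → r ∈ PS := by
      intro r P hP1 hfix hr
      have hr01 : r ∈ Set.Icc (0:ℝ) 1 := Icc_subset_Icc hc01.1 hd01.2 hr
      refine hPSin r hr01 (2^k * N * 2 * P) ?_ ?_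
      · have : 0 < 2^k * N * 2 * P := by positivity
        omega
      · rw [← hHHiter]
        exact hfix
    have hPSout' : ∀ r ∈ PS, ∃ p, 1 ≤ p ∧ HH^[p] r = r := by
      intro r hr
      obtain ⟨p, hp1, hpfix⟩ := hPSout r hr
      refine ⟨p, hp1, ?_⟩
      rw [hHHiter p, show 2^k * N * 2 * p = p * (2^k * N * 2) by ring, Function.iterate_mul]
      exact Function.iterate_fixed hpfix _
    exact horseshoe_contradiction hHHc h2 h5 (h3.trans h4)
      (Icc_subset_Icc h1 (h3.le.trans (hzd.le.trans (le_refl d))))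
      (Icc_subset_Icc (hcz.le.trans h4.le) h6)
      covA2 covB2 PS hPScl hPSin' hPSout'
end
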